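/- Let θ > 0, let p̄ = (x̄, ȳ, t̄) ∈ ℍ^n, r > 0, and set ρ = 2(1 + 1/sin θ) r. Let a = (a₁,a₂,a₃) ∈ B_H(p̄, 2r). Then for every unit vector (e'₁,e'₂) ∈ ℝ^n × ℝ^n (‖e'₁‖²+‖e'₂‖² = 1) and every s with 0 ≤ s ≤ r/sin θ, the point q = (se'₁ + a₁, se'₂ + a₂, 2s(⟨e'₁,ȳ⟩ − ⟨e'₂,x̄⟩) + a₃) belongs to B_H(p̄, ρ). -/

import Mathlib

open MeasureTheory Set
open scoped ENNReal NNReal RealInnerProductSpace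

noncomputable section

/-- The Heisenberg (Korányi) distance between `(x̄,ȳ,t̄)` and `(x,y,t)`, written in coordinates:
`d_H((x̄,ȳ,t̄),(x,y,t)) = ((‖x̄−x‖²+‖ȳ−y‖²)² + (t̄−t+2(⟨x,ȳ⟩−⟨y,x̄⟩))²)^(1/4)`. -/
def heisDistT {n : ℕ} (xb yb x y : EuclideanSpace ℝ (Fin n)) (tb t : ℝ) : ℝ :=
  ((‖xb - x‖^2 + ‖yb - y‖^2)^2 + (tb - t + 2*(⟪x, yb⟫ - ⟪y, xb⟫))^2) ^ ((1:ℝ)/4)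

/-!
The displacement from `a` to `q` is horizontal at `p̄`: it leaves the vertical coordinate
`t̄ - t + 2(⟨x,ȳ⟩ - ⟨y,x̄⟩)` of `q⁻¹ * p̄` unchanged and moves its horizontal part
`(x̄ - x, ȳ - y) ∈ ℝⁿ × ℝⁿ` by a Euclidean vector of length `s`. The gauge `h ↦ (h⁴ + T²)^(1/4)` is
`1`-Lipschitz in `h ≥ 0`, so `d_H(p̄, q) ≤ d_H(p̄, a) + s < 2r + r / sin θ ≤ ρ`.
-/

open WithLp

def koranyiGauge (h T : ℝ) : ℝ := ((h ^ 2) ^ 2 + T ^ 2) ^ ((1:ℝ) / 4)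

lemma koranyiGauge_nonneg (h T : ℝ) : 0 ≤ koranyiGauge h T := by
  unfold koranyiGauge; positivity

lemma koranyiGauge_le_iff {h T ρ : ℝ} (hρ : 0 ≤ ρ) :
    koranyiGauge h T ≤ ρ ↔ (h ^ 2) ^ 2 + T ^ 2 ≤ ρ ^ 4 := by
  rw [koranyiGauge, one_div, Real.rpow_inv_le_iff_of_pos (by positivity) hρ (by norm_num)]
  norm_cast

lemma koranyiGauge_pow_four (h T : ℝ) : koranyiGauge h T ^ 4 = (h ^ 2) ^ 2 + T ^ 2 := by
  rw [koranyiGauge, one_div]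
  exact_mod_cast Real.rpow_inv_natCast_pow (n := 4) (by positivity) (by norm_num)

lemma koranyiGauge_le_add {h h' T s : ℝ} (hh : 0 ≤ h) (hh' : 0 ≤ h') (hs : 0 ≤ s)
    (hle : h' ≤ h + s) : koranyiGauge h' T ≤ koranyiGauge h T + s := by
  set N := koranyiGauge h T
  have hN : 0 ≤ N := koranyiGauge_nonneg h T
  have hN4 : N ^ 4 = (h ^ 2) ^ 2 + T ^ 2 := koranyiGauge_pow_four h T
  have hhN : h ≤ N := by
    refine le_of_pow_le_pow_left₀ (n := 4) (by norm_num) hN ?_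
    nlinarith [sq_nonneg T]
  rw [koranyiGauge_le_iff (by positivity)]
  -- `(N + s)⁴ - N⁴ ≥ (h + s)⁴ - h⁴` because `N ≥ h`
  have hh's : h' ^ 4 ≤ (h + s) ^ 4 := pow_le_pow_left₀ hh' hle 4
  nlinarith [mul_le_mul_of_nonneg_left hhN hs, pow_le_pow_left₀ hh hhN 2, pow_le_pow_left₀ hh hhN 3,
    mul_nonneg hs (sq_nonneg s), mul_nonneg (mul_nonneg hs hs) hs]

section

variable {n : ℕ}

lemma heisDistT_eq_koranyiGauge (xb yb x y : EuclideanSpace ℝ (Fin n)) (tb t : ℝ) :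
    heisDistT xb yb x y tb t =
      koranyiGauge ‖toLp 2 (xb - x, yb - y)‖ (tb - t + 2 * (⟪x, yb⟫ - ⟪y, xb⟫)) := by
  rw [heisDistT, koranyiGauge, prod_norm_sq_eq_of_L2]
  rfl

lemma heisDistT_add_horizontal_le (xb yb a₁ a₂ v₁ v₂ : EuclideanSpace ℝ (Fin n)) (tb a₃ : ℝ) :
    heisDistT xb yb (v₁ + a₁) (v₂ + a₂) tb (2 * (⟪v₁, yb⟫ - ⟪v₂, xb⟫) + a₃) ≤
      heisDistT xb yb a₁ a₂ tb a₃ + ‖toLp 2 (v₁, v₂)‖ := by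
  have hvert : tb - (2 * (⟪v₁, yb⟫ - ⟪v₂, xb⟫) + a₃) + 2 * (⟪v₁ + a₁, yb⟫ - ⟪v₂ + a₂, xb⟫) =
      tb - a₃ + 2 * (⟪a₁, yb⟫ - ⟪a₂, xb⟫) := by
    simp only [inner_add_left]; ring
  have hhor : (xb - (v₁ + a₁), yb - (v₂ + a₂)) = (xb - a₁, yb - a₂) - (v₁, v₂) := by
    rw [Prod.mk_sub_mk]
    congr 1 <;> abel
  rw [heisDistT_eq_koranyiGauge, heisDistT_eq_koranyiGauge, hvert, hhor,
    toLp_sub 2 (xb - a₁, yb - a₂) (v₁, v₂)]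
  exact koranyiGauge_le_add (norm_nonneg _) (norm_nonneg _) (norm_nonneg _) (norm_sub_le _ _)

end

theorem segments_contained_in_enlarged_ball_general
    (n : ℕ) (θ r : ℝ)
    (xb yb a₁ a₂ : EuclideanSpace ℝ (Fin n)) (tb a₃ : ℝ)
    (ha : heisDistT xb yb a₁ a₂ tb a₃ < 2*r)
    (e₁' e₂' : EuclideanSpace ℝ (Fin n)) (he : ‖e₁'‖^2 + ‖e₂'‖^2 = 1)
    (s : ℝ) (hs0 : 0 ≤ s) (hs : s ≤ r / Real.sin θ) :
    heisDistT xb yb (s • e₁' + a₁) (s • e₂' + a₂) tb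
        (2*s*(⟪e₁', yb⟫ - ⟪e₂', xb⟫) + a₃)
      < 2*(1 + 1/Real.sin θ)*r := by
  have hunit : ‖toLp 2 (e₁', e₂')‖ = 1 := by
    rw [prod_norm_eq_of_L2, toLp_fst, toLp_snd, he, Real.sqrt_one]
  have hstep : ‖toLp 2 (s • e₁', s • e₂')‖ = s := by
    rw [← Prod.smul_mk, toLp_smul, norm_smul, hunit, Real.norm_of_nonneg hs0, mul_one]
  have hvert : 2 * s * (⟪e₁', yb⟫ - ⟪e₂', xb⟫) = 2 * (⟪s • e₁', yb⟫ - ⟪s • e₂', xb⟫) := by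
    simp only [real_inner_smul_left]; ring
  have hshift := heisDistT_add_horizontal_le xb yb a₁ a₂ (s • e₁') (s • e₂') tb a₃
  rw [hstep, ← hvert] at hshift
  have : 2 * (1 + 1 / Real.sin θ) * r = 2 * r + 2 * (r / Real.sin θ) := by ring
  linarith

theorem segments_contained_in_enlarged_ball
    (n : ℕ) (θ r : ℝ) (hθ : 0 < θ) (hr : 0 < r)
    (xb yb a₁ a₂ : EuclideanSpace ℝ (Fin n)) (tb a₃ : ℝ)
    (ha : heisDistT xb yb a₁ a₂ tb a₃ < 2*r)
    (e₁' e₂' : EuclideanSpace ℝ (Fin n)) (he : ‖e₁'‖^2 + ‖e₂'‖^2 = 1)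
    (s : ℝ) (hs0 : 0 ≤ s) (hs : s ≤ r / Real.sin θ) :
    heisDistT xb yb (s • e₁' + a₁) (s • e₂' + a₂) tb
        (2*s*(⟪e₁', yb⟫ - ⟪e₂', xb⟫) + a₃)
      < 2*(1 + 1/Real.sin θ)*r :=
  segments_contained_in_enlarged_ball_general n θ r xb yb a₁ a₂ tb a₃ ha e₁' e₂' he s hs0 hs
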